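/- arXiv:math/9904168 — 8 statements merged into one kernel-verified Lean document; each statement's English description precedes it below -/
import Mathlib

section
/- Let R be a commutative ring, M an R-module, and δ, Δ : M → M two R-linear maps satisfying δ ∘ δ = 0, Δ ∘ Δ = 0 and δ ∘ Δ + Δ ∘ δ = 0. Assume range(δ ∘ Δ) = range(δ) ⊓ ker(Δ) and range(δ ∘ Δ) = range(Δ) ⊓ ker(δ). Then: (a) for every z ∈ ker(δ) there exist h ∈ ker(δ) ⊓ ker(Δ) and v ∈ M with z = h + δ v; (b) every element of ker(δ) ⊓ ker(Δ) ⊓ range(δ) lies in the image δ(ker Δ) of ker(Δ) under δ; and the analogous statements (a'), (b') hold with the roles of δ and Δ interchanged. (Equivalently, the inclusions (ker Δ, δ) ↪ (M, δ) and (ker δ, Δ) ↪ (M, Δ) induce isomorphisms on homology.) -/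
/-!
Anticommutation gives `Δ ∘ δ = -(δ ∘ Δ)`, so both maps have the same range and the situation is
symmetric in `δ` and `Δ`. If `δ z = 0`, then `Δ z` lies in `range Δ ⊓ ker δ = range (Δ ∘ δ)`,
say `Δ z = Δ (δ v)`, and `z - δ v` is killed by both maps. A `δ`-boundary in `ker Δ` lies in
`range (δ ∘ Δ) = δ (range Δ) ⊆ δ (ker Δ)`.
-/

open LinearMap

section Anticommuting

variable {R M : Type*} [Semiring R] [AddCommGroup M] [Module R M] {δ Δ : M →ₗ[R] M}

theorem LinearMap.apply_mem_ker_of_add_eq_zero (hanti : δ ∘ₗ Δ + Δ ∘ₗ δ = 0) {z : M}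
    (hz : z ∈ ker δ) : Δ z ∈ ker δ := by
  have hz' : δ (Δ z) + Δ (δ z) = 0 := congr($hanti z)
  rw [mem_ker] at hz ⊢
  rwa [hz, map_zero, add_zero] at hz'

theorem LinearMap.exists_mem_ker_inf_ker_add_apply (hδ : δ ∘ₗ δ = 0)
    (hanti : δ ∘ₗ Δ + Δ ∘ₗ δ = 0) (hrange : range Δ ⊓ ker δ ≤ range (Δ ∘ₗ δ)) {z : M}
    (hz : z ∈ ker δ) : ∃ h ∈ ker δ ⊓ ker Δ, ∃ v : M, z = h + δ v := by
  obtain ⟨v, hv⟩ := hrange ⟨mem_range_self Δ z, apply_mem_ker_of_add_eq_zero hanti hz⟩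
  refine ⟨z - δ v, Submodule.mem_inf.mpr ⟨?_, ?_⟩, v, (sub_add_cancel z (δ v)).symm⟩
  · have hδv : δ (δ v) = 0 := congr($hδ v)
    rw [mem_ker] at hz ⊢
    rw [map_sub, hz, hδv, sub_zero]
  · rw [mem_ker, map_sub, ← hv, comp_apply, sub_self]

end Anticommuting

theorem LinearMap.range_comp_comm_of_add_eq_zero {R M : Type*} [Ring R] [AddCommGroup M]
    [Module R M] {δ Δ : M →ₗ[R] M} (hanti : δ ∘ₗ Δ + Δ ∘ₗ δ = 0) :
    range (Δ ∘ₗ δ) = range (δ ∘ₗ Δ) := by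
  rw [eq_neg_of_add_eq_zero_right hanti, range_neg]

theorem LinearMap.range_comp_le_map_ker {R M N : Type*} [Semiring R] [AddCommMonoid M]
    [AddCommMonoid N] [Module R M] [Module R N] (f : M →ₗ[R] N) {Δ : M →ₗ[R] M}
    (hΔ : Δ ∘ₗ Δ = 0) : range (f ∘ₗ Δ) ≤ (ker Δ).map f := by
  rw [range_comp]
  exact Submodule.map_mono (range_le_ker_iff.mpr hΔ)

/-- Lemma 1 of Cao–Zhou, direction (ii) ⟹ (i): if
`range (δ ∘ Δ) = range δ ⊓ ker Δ` and `range (δ ∘ Δ) = range Δ ⊓ ker δ`, then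
the inclusions `(ker Δ, δ) ↪ (M, δ)` and `(ker δ, Δ) ↪ (M, Δ)` induce
isomorphisms on homology, expressed via (a) surjectivity and (b) injectivity
of the induced maps, together with the analogous statements (a'), (b') with
the roles of `δ` and `Δ` interchanged. -/
theorem stmt1 {R : Type*} [CommRing R] {M : Type*} [AddCommGroup M] [Module R M]
    (δ Δ : M →ₗ[R] M)
    (hδ : δ ∘ₗ δ = 0) (hΔ : Δ ∘ₗ Δ = 0) (hanti : δ ∘ₗ Δ + Δ ∘ₗ δ = 0)
    (h1 : LinearMap.range (δ ∘ₗ Δ) = LinearMap.range δ ⊓ LinearMap.ker Δ)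
    (h2 : LinearMap.range (δ ∘ₗ Δ) = LinearMap.range Δ ⊓ LinearMap.ker δ) :
    (∀ z ∈ LinearMap.ker δ,
        ∃ h ∈ LinearMap.ker δ ⊓ LinearMap.ker Δ, ∃ v : M, z = h + δ v) ∧
    (∀ y ∈ LinearMap.ker δ ⊓ LinearMap.ker Δ ⊓ LinearMap.range δ,
        ∃ w ∈ LinearMap.ker Δ, y = δ w) ∧
    (∀ z ∈ LinearMap.ker Δ,
        ∃ h ∈ LinearMap.ker δ ⊓ LinearMap.ker Δ, ∃ v : M, z = h + Δ v) ∧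
    (∀ y ∈ LinearMap.ker δ ⊓ LinearMap.ker Δ ⊓ LinearMap.range Δ,
        ∃ w ∈ LinearMap.ker δ, y = Δ w) := by
  have h2' : range (Δ ∘ₗ δ) = range Δ ⊓ ker δ := (range_comp_comm_of_add_eq_zero hanti).trans h2
  have hanti' : Δ ∘ₗ δ + δ ∘ₗ Δ = 0 := by rwa [add_comm]
  refine ⟨fun z hz => exists_mem_ker_inf_ker_add_apply hδ hanti h2'.ge hz, ?_, ?_, ?_⟩
  · rintro y ⟨⟨-, hyΔ⟩, hyδ⟩
    obtain ⟨w, hw, rfl⟩ := range_comp_le_map_ker δ hΔ (h1.ge ⟨hyδ, hyΔ⟩)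
    exact ⟨w, hw, rfl⟩
  · intro z hz
    obtain ⟨h, hh, v, rfl⟩ := exists_mem_ker_inf_ker_add_apply hΔ hanti' h1.ge hz
    exact ⟨h, inf_comm (ker Δ) (ker δ) ▸ hh, v, rfl⟩
  · rintro y ⟨⟨hyδ, -⟩, hyΔ⟩
    obtain ⟨w, hw, rfl⟩ := range_comp_le_map_ker Δ hδ (h2'.ge ⟨hyΔ, hyδ⟩)
    exact ⟨w, hw, rfl⟩
end

section
/- Let R be a commutative ring, M an R-module, and δ, Δ : M → M two R-linear maps satisfying δ ∘ δ = 0, Δ ∘ Δ = 0 and δ ∘ Δ + Δ ∘ δ = 0. Assume: (a) for every z ∈ ker(δ) there exist h ∈ ker(δ) ⊓ ker(Δ) and v ∈ M with z = h + δ v; (b) every element of ker(δ) ⊓ ker(Δ) ⊓ range(δ) lies in δ(ker Δ); and the analogous statements (a'), (b') with the roles of δ and Δ interchanged. Then range(δ ∘ Δ) = range(δ) ⊓ ker(Δ) and range(δ ∘ Δ) = range(Δ) ⊓ ker(δ). -/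
/-!
Condition (b) lifts every element of `range δ ⊓ ker Δ` to `δ (ker Δ)`, and condition (a') splits
`ker Δ ≤ ker δ ⊔ range Δ`, so `δ (ker Δ) ≤ δ (range Δ) = range (δ ∘ Δ)`; the reverse inclusion
comes from `Δ δ Δ = -Δ Δ δ = 0`. Since `δ ∘ Δ = -(Δ ∘ δ)` has the same range as `Δ ∘ δ`, the
second equality is the first one with the roles of `δ` and `Δ` exchanged.
-/

open LinearMap Submodule

section Semiring

variable {R M : Type*} [Semiring R] [AddCommMonoid M] [Module R M]

theorem Submodule.le_sup_range_of_forall_eq_add {K N : Submodule R M} {f : M →ₗ[R] M}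
    (h : ∀ z ∈ N, ∃ k ∈ K, ∃ v, z = k + f v) : N ≤ K ⊔ range f := by
  intro z hz
  obtain ⟨k, hk, v, rfl⟩ := h z hz
  exact add_mem (mem_sup_left hk) (mem_sup_right (mem_range_self f v))

theorem LinearMap.range_inf_ker_le_map_ker {δ Δ : M →ₗ[R] M} (hδ : δ ∘ₗ δ = 0)
    (h : ∀ y ∈ ker δ ⊓ ker Δ ⊓ range δ, ∃ w ∈ ker Δ, y = δ w) :
    range δ ⊓ ker Δ ≤ (ker Δ).map δ := by
  rintro y ⟨hyδ, hyΔ⟩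
  obtain ⟨w, hw, rfl⟩ := h y ⟨⟨range_le_ker_iff.2 hδ hyδ, hyΔ⟩, hyδ⟩
  exact mem_map_of_mem hw

end Semiring

section Ring

variable {R M : Type*} [Ring R] [AddCommGroup M] [Module R M]

theorem LinearMap.range_comp_eq_range_comp_of_add_eq_zero {δ Δ : M →ₗ[R] M}
    (hanti : δ ∘ₗ Δ + Δ ∘ₗ δ = 0) : range (δ ∘ₗ Δ) = range (Δ ∘ₗ δ) := by
  rw [eq_neg_of_add_eq_zero_left hanti, range_neg]

theorem LinearMap.range_comp_eq_range_inf_ker {δ Δ : M →ₗ[R] M}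
    (hΔ : Δ ∘ₗ Δ = 0) (hanti : δ ∘ₗ Δ + Δ ∘ₗ δ = 0)
    (hlift : range δ ⊓ ker Δ ≤ (ker Δ).map δ) (hsplit : ker Δ ≤ ker δ ⊔ range Δ) :
    range (δ ∘ₗ Δ) = range δ ⊓ ker Δ := by
  refine le_antisymm (le_inf (range_comp_le_range Δ δ) (range_le_ker_iff.2 ?_)) ?_
  · rw [eq_neg_of_add_eq_zero_left hanti, comp_neg, ← comp_assoc, hΔ, zero_comp, neg_zero]
  · calc range δ ⊓ ker Δ ≤ (ker Δ).map δ := hlift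
      _ ≤ (ker δ ⊔ range Δ).map δ := map_mono hsplit
      _ = range (δ ∘ₗ Δ) := by
        rw [Submodule.map_sup, le_ker_iff_map.1 le_rfl, bot_sup_eq, range_comp]

end Ring

/-- Lemma 1 of Cao–Zhou, direction (i) ⟹ (ii): if the inclusions
`(ker Δ, δ) ↪ (M, δ)` and `(ker δ, Δ) ↪ (M, Δ)` induce isomorphisms on
homology (expressed via conditions (a), (b), (a'), (b')), then
`range (δ ∘ Δ) = range δ ⊓ ker Δ` and `range (δ ∘ Δ) = range Δ ⊓ ker δ`. -/
theorem stmt2 {R : Type*} [CommRing R] {M : Type*} [AddCommGroup M] [Module R M]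
    (δ Δ : M →ₗ[R] M)
    (hδ : δ ∘ₗ δ = 0) (hΔ : Δ ∘ₗ Δ = 0) (hanti : δ ∘ₗ Δ + Δ ∘ₗ δ = 0)
    (ha : ∀ z ∈ LinearMap.ker δ,
        ∃ h ∈ LinearMap.ker δ ⊓ LinearMap.ker Δ, ∃ v : M, z = h + δ v)
    (hb : ∀ y ∈ LinearMap.ker δ ⊓ LinearMap.ker Δ ⊓ LinearMap.range δ,
        ∃ w ∈ LinearMap.ker Δ, y = δ w)
    (ha' : ∀ z ∈ LinearMap.ker Δ,
        ∃ h ∈ LinearMap.ker δ ⊓ LinearMap.ker Δ, ∃ v : M, z = h + Δ v)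
    (hb' : ∀ y ∈ LinearMap.ker δ ⊓ LinearMap.ker Δ ⊓ LinearMap.range Δ,
        ∃ w ∈ LinearMap.ker δ, y = Δ w) :
    LinearMap.range (δ ∘ₗ Δ) = LinearMap.range δ ⊓ LinearMap.ker Δ ∧
    LinearMap.range (δ ∘ₗ Δ) = LinearMap.range Δ ⊓ LinearMap.ker δ := by
  have hsplit : ker Δ ≤ ker δ ⊔ range Δ :=
    (le_sup_range_of_forall_eq_add ha').trans (sup_le_sup_right inf_le_left _)
  have hsplit' : ker δ ≤ ker Δ ⊔ range δ :=
    (le_sup_range_of_forall_eq_add ha).trans (sup_le_sup_right inf_le_right _)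
  have hanti' : Δ ∘ₗ δ + δ ∘ₗ Δ = 0 := by rwa [add_comm]
  refine ⟨range_comp_eq_range_inf_ker hΔ hanti (range_inf_ker_le_map_ker hδ hb) hsplit, ?_⟩
  rw [range_comp_eq_range_comp_of_add_eq_zero hanti]
  exact range_comp_eq_range_inf_ker hδ hanti'
    (range_inf_ker_le_map_ker hΔ (inf_comm (ker δ) (ker Δ) ▸ hb')) hsplit'
end

section
/- Let R be a commutative ring, M an R-module, and δ, Δ : M → M two R-linear maps satisfying δ ∘ δ = 0, Δ ∘ Δ = 0 and δ ∘ Δ + Δ ∘ δ = 0. Assume range(δ ∘ Δ) = range(δ) ⊓ ker(Δ) and range(δ ∘ Δ) = range(Δ) ⊓ ker(δ). Then the R-linear map from the submodule ker(δ) ⊓ ker(Δ) to the quotient module ker(δ) ⧸ range(δ), given by inclusion followed by the quotient projection, is surjective and its kernel is exactly range(δ ∘ Δ). In particular it induces an isomorphism (ker(δ) ⊓ ker(Δ)) ⧸ range(δ ∘ Δ) ≅ ker(δ) ⧸ range(δ). -/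
/-!
A class `x ∈ ker δ` is represented by an element of `ker δ ⊓ ker Δ`: anticommutation puts `Δ x`
in `range Δ ⊓ ker δ = range (δ ∘ Δ)`, say `Δ x = δ (Δ m)`, and then `x + δ m` is killed by both
maps. An element of `ker δ ⊓ ker Δ` is `δ`-exact iff it lies in `range δ ⊓ ker Δ = range (δ ∘ Δ)`.
-/

namespace LinearMap

variable {R M : Type*} [Semiring R] [AddCommGroup M] [Module R M] {δ Δ : M →ₗ[R] M}

theorem apply_apply_eq_neg_of_anticomm (hanti : δ ∘ₗ Δ + Δ ∘ₗ δ = 0) (x : M) :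
    Δ (δ x) = -δ (Δ x) :=
  eq_neg_of_add_eq_zero_right (congr($hanti x))

theorem exists_add_apply_mem_ker_inf_ker (hδ : δ ∘ₗ δ = 0) (hanti : δ ∘ₗ Δ + Δ ∘ₗ δ = 0)
    (h2 : range (δ ∘ₗ Δ) = range Δ ⊓ ker δ) {x : M} (hx : x ∈ ker δ) :
    ∃ m, x + δ m ∈ ker δ ⊓ ker Δ := by
  have hΔx : Δ x ∈ range (δ ∘ₗ Δ) := by
    rw [h2]
    refine ⟨mem_range_self Δ x, ?_⟩
    rw [SetLike.mem_coe, mem_ker, ← neg_eq_zero, ← apply_apply_eq_neg_of_anticomm hanti, mem_ker.mp hx, map_zero]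
  obtain ⟨m, hm⟩ := hΔx
  refine ⟨m, ?_, ?_⟩
  · rw [SetLike.mem_coe, mem_ker, map_add, mem_ker.mp hx, ← comp_apply, hδ, zero_apply, add_zero]
  · rw [SetLike.mem_coe, mem_ker, map_add, apply_apply_eq_neg_of_anticomm hanti, ← comp_apply, hm,
      add_neg_cancel]

end LinearMap

open LinearMap in
theorem stmt3_general {R : Type*} [CommRing R] {M : Type*} [AddCommGroup M] [Module R M]
    (δ Δ : M →ₗ[R] M)
    (hδ : δ ∘ₗ δ = 0) (hanti : δ ∘ₗ Δ + Δ ∘ₗ δ = 0)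
    (h1 : LinearMap.range (δ ∘ₗ Δ) = LinearMap.range δ ⊓ LinearMap.ker Δ)
    (h2 : LinearMap.range (δ ∘ₗ Δ) = LinearMap.range Δ ⊓ LinearMap.ker δ) :
    Function.Surjective
      ((Submodule.comap (LinearMap.ker δ).subtype (LinearMap.range δ)).mkQ ∘ₗ
        Submodule.inclusion
          (inf_le_left : LinearMap.ker δ ⊓ LinearMap.ker Δ ≤ LinearMap.ker δ)) ∧
    LinearMap.ker
      ((Submodule.comap (LinearMap.ker δ).subtype (LinearMap.range δ)).mkQ ∘ₗ
        Submodule.inclusion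
          (inf_le_left : LinearMap.ker δ ⊓ LinearMap.ker Δ ≤ LinearMap.ker δ)) =
      Submodule.comap (LinearMap.ker δ ⊓ LinearMap.ker Δ).subtype
        (LinearMap.range (δ ∘ₗ Δ)) := by
  constructor
  · intro q
    obtain ⟨⟨x, hx⟩, rfl⟩ := Submodule.Quotient.mk_surjective _ q
    obtain ⟨m, hm⟩ := exists_add_apply_mem_ker_inf_ker hδ hanti h2 hx
    refine ⟨⟨x + δ m, hm⟩, (Submodule.Quotient.eq _).mpr ⟨m, ?_⟩⟩
    simp
  · ext ⟨x, -, hΔx⟩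
    simp only [mem_ker, comp_apply, Submodule.mkQ_apply, Submodule.Quotient.mk_eq_zero,
      Submodule.mem_comap, Submodule.coe_subtype, h1]
    exact ⟨fun hx => ⟨hx, hΔx⟩, And.left⟩

/-- Lemma 1 of Cao–Zhou (last part, δ-cohomology version): under condition (ii),
the map `ker δ ⊓ ker Δ → ker δ ⧸ range δ` (inclusion followed by the quotient
projection) is surjective with kernel exactly `range (δ ∘ Δ)`; hence
`(ker δ ⊓ ker Δ) ⧸ range (δ ∘ Δ) ≅ ker δ ⧸ range δ`. -/
theorem stmt3 {R : Type*} [CommRing R] {M : Type*} [AddCommGroup M] [Module R M]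
    (δ Δ : M →ₗ[R] M)
    (hδ : δ ∘ₗ δ = 0) (hΔ : Δ ∘ₗ Δ = 0) (hanti : δ ∘ₗ Δ + Δ ∘ₗ δ = 0)
    (h1 : LinearMap.range (δ ∘ₗ Δ) = LinearMap.range δ ⊓ LinearMap.ker Δ)
    (h2 : LinearMap.range (δ ∘ₗ Δ) = LinearMap.range Δ ⊓ LinearMap.ker δ) :
    Function.Surjective
      ((Submodule.comap (LinearMap.ker δ).subtype (LinearMap.range δ)).mkQ ∘ₗ
        Submodule.inclusion
          (inf_le_left : LinearMap.ker δ ⊓ LinearMap.ker Δ ≤ LinearMap.ker δ)) ∧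
    LinearMap.ker
      ((Submodule.comap (LinearMap.ker δ).subtype (LinearMap.range δ)).mkQ ∘ₗ
        Submodule.inclusion
          (inf_le_left : LinearMap.ker δ ⊓ LinearMap.ker Δ ≤ LinearMap.ker δ)) =
      Submodule.comap (LinearMap.ker δ ⊓ LinearMap.ker Δ).subtype
        (LinearMap.range (δ ∘ₗ Δ)) :=
  stmt3_general δ Δ hδ hanti h1 h2
end

section
/- Let R be a commutative ring, M an R-module, and δ, Δ : M → M two R-linear maps satisfying δ ∘ δ = 0, Δ ∘ Δ = 0 and δ ∘ Δ + Δ ∘ δ = 0. Assume range(δ ∘ Δ) = range(δ) ⊓ ker(Δ) and range(δ ∘ Δ) = range(Δ) ⊓ ker(δ). Then the R-linear map from the submodule ker(δ) ⊓ ker(Δ) to the quotient module ker(Δ) ⧸ range(Δ), given by inclusion followed by the quotient projection, is surjective and its kernel is exactly range(δ ∘ Δ). In particular it induces an isomorphism (ker(δ) ⊓ ker(Δ)) ⧸ range(δ ∘ Δ) ≅ ker(Δ) ⧸ range(Δ). -/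
/-!
A class `x ∈ ker Δ` is represented by an element of `ker δ ⊓ ker Δ`: anticommutation puts `δ x`
in `range δ ⊓ ker Δ = range (δ ∘ Δ)`, say `δ x = δ (Δ m)`, and then `x - Δ m` is killed by both
differentials. On `ker δ` the condition `range (δ ∘ Δ) = range Δ ⊓ ker δ` says precisely that
lying in `range Δ` is the same as lying in `range (δ ∘ Δ)`, which identifies the kernel.
-/

namespace LinearMap

variable {R M : Type*} [Ring R] [AddCommGroup M] [Module R M] {δ Δ : M →ₗ[R] M}

theorem apply_mem_ker_of_comp_add_comp_eq_zero (hanti : δ ∘ₗ Δ + Δ ∘ₗ δ = 0) {x : M}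
    (hx : x ∈ ker Δ) : δ x ∈ ker Δ := by
  have hx : Δ x = 0 := hx
  simpa [hx] using congr($hanti x)

theorem exists_mem_ker_inf_ker_sub_mem_range (hΔ : Δ ∘ₗ Δ = 0)
    (hanti : δ ∘ₗ Δ + Δ ∘ₗ δ = 0) (h1 : range δ ⊓ ker Δ ≤ range (δ ∘ₗ Δ)) {x : M}
    (hx : x ∈ ker Δ) : ∃ y ∈ ker δ ⊓ ker Δ, x - y ∈ range Δ := by
  obtain ⟨m, hm⟩ := h1 ⟨mem_range_self δ x, apply_mem_ker_of_comp_add_comp_eq_zero hanti hx⟩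
  have hm : δ (Δ m) = δ x := hm
  have hΔΔ : Δ (Δ m) = 0 := congr($hΔ m)
  have hx : Δ x = 0 := hx
  refine ⟨x - Δ m, ⟨?_, ?_⟩, m, by simp⟩
  · simp [mem_ker, hm]
  · simp [mem_ker, hx, hΔΔ]

end LinearMap

theorem stmt4_general {R : Type*} [CommRing R] {M : Type*} [AddCommGroup M] [Module R M]
    (δ Δ : M →ₗ[R] M)
    (hΔ : Δ ∘ₗ Δ = 0) (hanti : δ ∘ₗ Δ + Δ ∘ₗ δ = 0)
    (h1 : LinearMap.range (δ ∘ₗ Δ) = LinearMap.range δ ⊓ LinearMap.ker Δ)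
    (h2 : LinearMap.range (δ ∘ₗ Δ) = LinearMap.range Δ ⊓ LinearMap.ker δ) :
    Function.Surjective
      ((Submodule.comap (LinearMap.ker Δ).subtype (LinearMap.range Δ)).mkQ ∘ₗ
        Submodule.inclusion
          (inf_le_right : LinearMap.ker δ ⊓ LinearMap.ker Δ ≤ LinearMap.ker Δ)) ∧
    LinearMap.ker
      ((Submodule.comap (LinearMap.ker Δ).subtype (LinearMap.range Δ)).mkQ ∘ₗ
        Submodule.inclusion
          (inf_le_right : LinearMap.ker δ ⊓ LinearMap.ker Δ ≤ LinearMap.ker Δ)) =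
      Submodule.comap (LinearMap.ker δ ⊓ LinearMap.ker Δ).subtype
        (LinearMap.range (δ ∘ₗ Δ)) := by
  constructor
  · rintro ⟨⟨x, hx⟩⟩
    obtain ⟨y, hy, hxy⟩ := LinearMap.exists_mem_ker_inf_ker_sub_mem_range hΔ hanti h1.ge hx
    refine ⟨⟨y, hy⟩, (Submodule.Quotient.eq _).mpr ?_⟩
    simpa [Submodule.mem_comap] using neg_mem hxy
  · ext ⟨x, hx⟩
    simp only [LinearMap.mem_ker, LinearMap.comp_apply, Submodule.mkQ_apply, Submodule.Quotient.mk_eq_zero,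
      Submodule.mem_comap, Submodule.subtype_apply, Submodule.coe_inclusion, h2]
    exact ⟨fun h => ⟨h, hx.1⟩, And.left⟩

/-- Lemma 1 of Cao–Zhou (last part, Δ-cohomology version): under condition (ii),
the map `ker δ ⊓ ker Δ → ker Δ ⧸ range Δ` (inclusion followed by the quotient
projection) is surjective with kernel exactly `range (δ ∘ Δ)`; hence
`(ker δ ⊓ ker Δ) ⧸ range (δ ∘ Δ) ≅ ker Δ ⧸ range Δ`. -/
theorem stmt4 {R : Type*} [CommRing R] {M : Type*} [AddCommGroup M] [Module R M]
    (δ Δ : M →ₗ[R] M)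
    (hδ : δ ∘ₗ δ = 0) (hΔ : Δ ∘ₗ Δ = 0) (hanti : δ ∘ₗ Δ + Δ ∘ₗ δ = 0)
    (h1 : LinearMap.range (δ ∘ₗ Δ) = LinearMap.range δ ⊓ LinearMap.ker Δ)
    (h2 : LinearMap.range (δ ∘ₗ Δ) = LinearMap.range Δ ⊓ LinearMap.ker δ) :
    Function.Surjective
      ((Submodule.comap (LinearMap.ker Δ).subtype (LinearMap.range Δ)).mkQ ∘ₗ
        Submodule.inclusion
          (inf_le_right : LinearMap.ker δ ⊓ LinearMap.ker Δ ≤ LinearMap.ker Δ)) ∧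
    LinearMap.ker
      ((Submodule.comap (LinearMap.ker Δ).subtype (LinearMap.range Δ)).mkQ ∘ₗ
        Submodule.inclusion
          (inf_le_right : LinearMap.ker δ ⊓ LinearMap.ker Δ ≤ LinearMap.ker Δ)) =
      Submodule.comap (LinearMap.ker δ ⊓ LinearMap.ker Δ).subtype
        (LinearMap.range (δ ∘ₗ Δ)) :=
  stmt4_general δ Δ hΔ hanti h1 h2
end

section
/- Let R be a commutative ring, M an R-module, and δ, Δ : M → M two R-linear maps satisfying δ ∘ δ = 0, Δ ∘ Δ = 0 and δ ∘ Δ + Δ ∘ δ = 0, and assume range(δ ∘ Δ) = range(δ) ⊓ ker(Δ) and range(δ ∘ Δ) = range(Δ) ⊓ ker(δ). If z ∈ M satisfies δ(Δ z) = 0, then there exist h ∈ ker(δ) ⊓ ker(Δ) and u, v ∈ M such that z = h + Δ u + δ v. -/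
/-! Since `Δ z` lies in `range Δ ⊓ ker δ = range (δ ∘ Δ)`, adding a suitable `δ`-boundary moves `z`
to some `y ∈ ker Δ`; then `δ y` lies in `range δ ⊓ ker Δ = range (δ ∘ Δ)`, so subtracting a
suitable `Δ`-boundary moves `y` into `ker δ` as well, without leaving `ker Δ`. -/

section Anticommuting

variable {R M : Type*} [Semiring R] [AddCommGroup M] [Module R M] {δ Δ : M →ₗ[R] M}

lemma apply_apply_eq_neg_of_comp_add_comp_eq_zero (hanti : δ ∘ₗ Δ + Δ ∘ₗ δ = 0) (x : M) :
    Δ (δ x) = -δ (Δ x) :=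
  eq_neg_of_add_eq_zero_right (LinearMap.congr_fun hanti x)

lemma exists_add_apply_mem_ker_of_mem_range_comp (hanti : δ ∘ₗ Δ + Δ ∘ₗ δ = 0) {z : M}
    (hz : Δ z ∈ LinearMap.range (δ ∘ₗ Δ)) : ∃ w, z + δ w ∈ LinearMap.ker Δ := by
  obtain ⟨w, hw⟩ := hz
  refine ⟨w, ?_⟩
  rw [LinearMap.mem_ker, map_add, apply_apply_eq_neg_of_comp_add_comp_eq_zero hanti,
    ← LinearMap.comp_apply, hw, add_neg_cancel]

lemma exists_sub_apply_mem_ker_inf_ker (hΔ : Δ ∘ₗ Δ = 0) (hanti : δ ∘ₗ Δ + Δ ∘ₗ δ = 0)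
    (hrange : LinearMap.range δ ⊓ LinearMap.ker Δ ≤ LinearMap.range (δ ∘ₗ Δ)) {y : M}
    (hy : y ∈ LinearMap.ker Δ) : ∃ t, y - Δ t ∈ LinearMap.ker δ ⊓ LinearMap.ker Δ := by
  rw [LinearMap.mem_ker] at hy
  have hδy : δ y ∈ LinearMap.range δ ⊓ LinearMap.ker Δ := by
    refine Submodule.mem_inf.2 ⟨⟨y, rfl⟩, ?_⟩
    rw [LinearMap.mem_ker, apply_apply_eq_neg_of_comp_add_comp_eq_zero hanti, hy, map_zero,
      neg_zero]
  obtain ⟨t, ht⟩ := hrange hδy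
  refine ⟨t, Submodule.mem_inf.2 ⟨?_, ?_⟩⟩
  · rw [LinearMap.mem_ker, map_sub, ← LinearMap.comp_apply, ht, sub_self]
  · rw [LinearMap.mem_ker, map_sub, hy, ← LinearMap.comp_apply, hΔ, LinearMap.zero_apply,
      sub_zero]

end Anticommuting

theorem stmt5_general {R : Type*} [CommRing R] {M : Type*} [AddCommGroup M] [Module R M]
    (δ Δ : M →ₗ[R] M)
    (hΔ : Δ ∘ₗ Δ = 0) (hanti : δ ∘ₗ Δ + Δ ∘ₗ δ = 0)
    (h1 : LinearMap.range (δ ∘ₗ Δ) = LinearMap.range δ ⊓ LinearMap.ker Δ)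
    (h2 : LinearMap.range (δ ∘ₗ Δ) = LinearMap.range Δ ⊓ LinearMap.ker δ)
    (z : M) (hz : δ (Δ z) = 0) :
    ∃ h ∈ LinearMap.ker δ ⊓ LinearMap.ker Δ, ∃ u v : M, z = h + Δ u + δ v := by
  have hΔz : Δ z ∈ LinearMap.range (δ ∘ₗ Δ) := h2 ▸ ⟨⟨z, rfl⟩, hz⟩
  obtain ⟨w, hw⟩ := exists_add_apply_mem_ker_of_mem_range_comp hanti hΔz
  obtain ⟨t, ht⟩ := exists_sub_apply_mem_ker_inf_ker hΔ hanti h1.ge hw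
  exact ⟨_, ht, t, -w, by rw [map_neg]; abel⟩

/-- Lemma 2 of Cao–Zhou: under condition (ii) of Lemma 1, if `δ (Δ z) = 0`
then `z = h + Δ u + δ v` with `h ∈ ker δ ⊓ ker Δ` and `u, v ∈ M`. -/
theorem stmt5 {R : Type*} [CommRing R] {M : Type*} [AddCommGroup M] [Module R M]
    (δ Δ : M →ₗ[R] M)
    (hδ : δ ∘ₗ δ = 0) (hΔ : Δ ∘ₗ Δ = 0) (hanti : δ ∘ₗ Δ + Δ ∘ₗ δ = 0)
    (h1 : LinearMap.range (δ ∘ₗ Δ) = LinearMap.range δ ⊓ LinearMap.ker Δ)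
    (h2 : LinearMap.range (δ ∘ₗ Δ) = LinearMap.range Δ ⊓ LinearMap.ker δ)
    (z : M) (hz : δ (Δ z) = 0) :
    ∃ h ∈ LinearMap.ker δ ⊓ LinearMap.ker Δ, ∃ u v : M, z = h + Δ u + δ v :=
  stmt5_general δ Δ hΔ hanti h1 h2 z hz
end

section
/- Let R be a commutative ring and L a Lie algebra over R. For A, B ∈ L, with ad_X denoting the adjoint endomorphism [X, ·] of L, the following identity of linear endomorphisms of L holds for every natural number n ≥ 1: ad_B ∘ (ad_A)^n = Σ_{j=0}^{n} (n choose j) · (ad_A)^j ∘ ad_{((-ad_A)^{n-j})(B)}. -/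
/-!
In an associative algebra, right multiplication by `a` is `mulLeft a + (-ad a)`, a sum of
commuting operators, so the binomial theorem expands `x * a ^ n`. Apply this in `Module.End R L`
to `a = ad A`, `x = ad B`: since `ad` is a Lie algebra morphism, `(-ad (ad A)) ^ k (ad B)` is
`ad ((-ad A) ^ k B)`.
-/

open LieAlgebra Finset

attribute [local instance] LieRing.ofAssociativeRing

section Associative

variable {R A : Type*} [CommRing R] [Ring A] [Algebra R A]

theorem mul_pow_eq_sum_choose_pow_mul_neg_ad_pow (x a : A) (n : ℕ) :
    x * a ^ n = ∑ j ∈ range (n + 1), n.choose j • (a ^ j * ((-ad R A a) ^ (n - j)) x) := by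
  have had : ad R A a = LinearMap.mulLeft R a - LinearMap.mulRight R a :=
    congrFun (ad_eq_lmul_left_sub_lmul_right A) a
  have hsplit : LinearMap.mulRight R a = LinearMap.mulLeft R a + -ad R A a := by
    rw [had]
    abel
  have hcomm : Commute (LinearMap.mulLeft R a) (-ad R A a) := by
    rw [had]
    exact ((Commute.refl _).sub_right (LinearMap.commute_mulLeft_right a a)).neg_right
  calc x * a ^ n = (LinearMap.mulRight R a ^ n) x := by
        rw [LinearMap.pow_mulRight, LinearMap.mulRight_apply]
    _ = _ := by
        rw [hsplit, hcomm.add_pow, LinearMap.sum_apply]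
        refine sum_congr rfl fun j _ => ?_
        rw [Module.End.mul_apply, Module.End.mul_apply, Module.End.natCast_apply,
          map_nsmul, LinearMap.pow_mulLeft, LinearMap.mulLeft_apply, mul_smul_comm]

end Associative

theorem LieHom.neg_ad_pow_comp {R L L' : Type*} [CommRing R] [LieRing L] [LieAlgebra R L]
    [LieRing L'] [LieAlgebra R L'] (f : L →ₗ⁅R⁆ L') (x : L) (k : ℕ) :
    ((-ad R L' (f x)) ^ k) ∘ₗ (f : L →ₗ[R] L') = (f : L →ₗ[R] L') ∘ₗ ((-ad R L x) ^ k) :=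
  Module.End.commute_pow_left_of_commute (by ext; simp) k

theorem stmt6_general {R : Type*} [CommRing R] {L : Type*} [LieRing L] [LieAlgebra R L]
    (A B : L) (n : ℕ) :
    (LieAlgebra.ad R L B) * (LieAlgebra.ad R L A) ^ n =
      ∑ j ∈ Finset.range (n + 1),
        (n.choose j) •
          ((LieAlgebra.ad R L A) ^ j *
            LieAlgebra.ad R L (((-(LieAlgebra.ad R L A)) ^ (n - j)) B)) := by
  rw [mul_pow_eq_sum_choose_pow_mul_neg_ad_pow (R := R)]
  refine sum_congr rfl fun j _ => ?_
  congr 2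
  exact LinearMap.congr_fun ((ad R L).neg_ad_pow_comp A (n - j)) B

/-- Lemma 3.1 (first part) of Cao–Zhou, ungraded form: for elements `A, B` of a
Lie algebra `L` over a commutative ring `R` and `n ≥ 1`,
`ad_B ∘ (ad_A)ⁿ = Σ_{j=0}^{n} (n choose j) • (ad_A)ʲ ∘ ad_{((-ad_A)^{n-j}) B}`. -/
theorem stmt6 {R : Type*} [CommRing R] {L : Type*} [LieRing L] [LieAlgebra R L]
    (A B : L) (n : ℕ) (hn : 1 ≤ n) :
    (LieAlgebra.ad R L B) * (LieAlgebra.ad R L A) ^ n =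
      ∑ j ∈ Finset.range (n + 1),
        (n.choose j) •
          ((LieAlgebra.ad R L A) ^ j *
            LieAlgebra.ad R L (((-(LieAlgebra.ad R L A)) ^ (n - j)) B)) :=
  stmt6_general A B n
end

section
/- Let R be a commutative ring, L a Lie algebra over R, and d : L → L an R-linear Lie derivation, i.e. d[x, y] = [d x, y] + [x, d y] for all x, y ∈ L. Then for every A ∈ L and every natural number n ≥ 1, the following identity of linear endomorphisms of L holds: d ∘ (ad_A)^n = (ad_A)^n ∘ d + Σ_{q=0}^{n-1} (n choose (n−1−q)) · (ad_A)^{n−1−q} ∘ ad_{((-ad_A)^{q})(d A)}. -/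
/-!
In the associative algebra `Module.End R L` put `T = ad A` and `D = mulRight T - mulLeft T`,
so that `D X = X T - T X`. Since `mulRight T = mulLeft T + D` with commuting summands, the
binomial theorem gives `d Tⁿ = Σₖ (n choose k) Tⁿ⁻ᵏ (Dᵏ d)`. The Leibniz rule says `D d = ad (d A)`,
and the Jacobi identity says `D (ad x) = ad (-[A, x])`, hence `D ^ (q + 1) d = ad ((-ad A) ^ q (d A))`.
-/

open Finset LieAlgebra LinearMap

theorem mul_pow_eq_sum_choose {R A : Type*} [CommRing R] [Ring A] [Algebra R A]
    (x y : A) (n : ℕ) :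
    x * y ^ n = ∑ k ∈ range (n + 1),
      n.choose k • (y ^ (n - k) * ((mulRight R y - mulLeft R y) ^ k) x) := by
  set D := mulRight R y - mulLeft R y
  have hcomm : Commute D (mulLeft R y) :=
    (commute_mulLeft_right y y).symm.sub_left (Commute.refl _)
  calc x * y ^ n = (mulRight R y ^ n) x := by rw [pow_mulRight]; rfl
    _ = _ := by
      rw [← sub_add_cancel (mulRight R y) (mulLeft R y), hcomm.add_pow, LinearMap.sum_apply]
      refine sum_congr rfl fun k _ => ?_
      rw [← nsmul_eq_mul', (hcomm.pow_pow k (n - k)).eq, LinearMap.smul_apply,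
        Module.End.mul_apply, pow_mulLeft, mulLeft_apply]

section Derivation

variable {R L : Type*} [CommRing R] [LieRing L] [LieAlgebra R L]

theorem mulRight_ad_sub_mulLeft_ad_apply_ad (A x : L) :
    (mulRight R (ad R L A) - mulLeft R (ad R L A)) (ad R L x) = ad R L ((-ad R L A) x) := by
  ext y
  simp only [LinearMap.sub_apply, mulRight_apply, mulLeft_apply, Module.End.mul_apply, ad_apply,
    LinearMap.neg_apply, neg_lie]
  rw [leibniz_lie A x y]
  abel

theorem mulRight_ad_sub_mulLeft_ad_apply_of_leibniz (d : L →ₗ[R] L)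
    (hd : ∀ x y : L, d ⁅x, y⁆ = ⁅d x, y⁆ + ⁅x, d y⁆) (A : L) :
    (mulRight R (ad R L A) - mulLeft R (ad R L A)) d = ad R L (d A) := by
  ext y
  simp [hd]

theorem mulRight_ad_sub_mulLeft_ad_pow_succ_apply_of_leibniz (d : L →ₗ[R] L)
    (hd : ∀ x y : L, d ⁅x, y⁆ = ⁅d x, y⁆ + ⁅x, d y⁆) (A : L) (q : ℕ) :
    ((mulRight R (ad R L A) - mulLeft R (ad R L A)) ^ (q + 1)) d =
      ad R L (((-ad R L A) ^ q) (d A)) := by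
  induction q with
  | zero => simpa using mulRight_ad_sub_mulLeft_ad_apply_of_leibniz d hd A
  | succ q ih =>
    rw [pow_succ', Module.End.mul_apply, ih, mulRight_ad_sub_mulLeft_ad_apply_ad,
      ← Module.End.mul_apply, ← pow_succ']

end Derivation

theorem stmt8_general {R : Type*} [CommRing R] {L : Type*} [LieRing L] [LieAlgebra R L]
    (d : L →ₗ[R] L) (hd : ∀ x y : L, d ⁅x, y⁆ = ⁅d x, y⁆ + ⁅x, d y⁆)
    (A : L) (n : ℕ) :
    d * (LieAlgebra.ad R L A) ^ n =
      (LieAlgebra.ad R L A) ^ n * d +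
        ∑ q ∈ Finset.range n,
          (n.choose (n - 1 - q)) •
            ((LieAlgebra.ad R L A) ^ (n - 1 - q) *
              LieAlgebra.ad R L (((-(LieAlgebra.ad R L A)) ^ q) (d A))) := by
  rw [mul_pow_eq_sum_choose (R := R), sum_range_succ', add_comm]
  simp only [Nat.choose_zero_right, Nat.sub_zero, pow_zero, Module.End.one_apply, one_smul]
  congr 1
  refine sum_congr rfl fun q hq => ?_
  have hq : q < n := mem_range.mp hq
  rw [mulRight_ad_sub_mulLeft_ad_pow_succ_apply_of_leibniz d hd, Nat.sub_sub, add_comm 1 q,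
    Nat.choose_symm_of_eq_add (by omega : n = (q + 1) + (n - (q + 1)))]

/-- Key identity in the proof of Lemma 3.2 of Cao–Zhou, ungraded form: for a
Lie derivation `d` of `L`, `A ∈ L` and `n ≥ 1`,
`d ∘ (ad_A)ⁿ = (ad_A)ⁿ ∘ d + Σ_{q=0}^{n-1} (n choose (n-1-q)) • (ad_A)^{n-1-q} ∘ ad_{((-ad_A)^q)(d A)}`. -/
theorem stmt8 {R : Type*} [CommRing R] {L : Type*} [LieRing L] [LieAlgebra R L]
    (d : L →ₗ[R] L) (hd : ∀ x y : L, d ⁅x, y⁆ = ⁅d x, y⁆ + ⁅x, d y⁆)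
    (A : L) (n : ℕ) (hn : 1 ≤ n) :
    d * (LieAlgebra.ad R L A) ^ n =
      (LieAlgebra.ad R L A) ^ n * d +
        ∑ q ∈ Finset.range n,
          (n.choose (n - 1 - q)) •
            ((LieAlgebra.ad R L A) ^ (n - 1 - q) *
              LieAlgebra.ad R L (((-(LieAlgebra.ad R L A)) ^ q) (d A))) :=
  stmt8_general d hd A n
end

section
/- Let R be a commutative ring that is also a ℚ-algebra, L a Lie algebra over R, and d : L → L an R-linear Lie derivation. Let A ∈ L be such that ad_A is nilpotent, and let exp(ad_A) = Σ_{n≥0} (1/n!)(ad_A)^n (a finite sum). Then exp(ad_A) ∘ d ∘ exp(−ad_A) = d − Σ_{q≥0} (1/(q+1)!) · ad_{((ad_A)^{q})(d A)} as linear endomorphisms of L (the sum on the right being finite by nilpotency of ad_A); equivalently, exp(ad_A) ∘ d ∘ exp(−ad_A) = d + ad_{N(dA)} where N is the endomorphism (1 − exp(ad_A))/ad_A = −Σ_{q≥0} (1/(q+1)!)(ad_A)^q. -/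
/-!
Conjugation by `exp a` is the exponential of the inner derivation `ad a = L_a - R_a`, because
left and right multiplication by `a` commute: `exp a * d * exp (-a) = exp (ad a) d`. For
`a = ad_A` and a Lie derivation `d` one has `⁅ad_A, d⁆ = -ad_(d A)`, and since `ad` is a Lie
homomorphism, `(ad a)^(q+1) d = -ad_((ad_A)^q (d A))`; the exponential series then gives the
formula, and it stops at `q = N` because `(ad_A)^N = 0`.
-/

open IsNilpotent Finset

attribute [local instance 100] LieRing.ofAssociativeRing

namespace IsNilpotent

variable {A : Type*} [Ring A] [Module ℚ A]

theorem exp_mulLeft_apply {a : A} (ha : IsNilpotent a) (x : A) :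
    exp (LinearMap.mulLeft ℤ a) x = exp a * x := by
  obtain ⟨k, hk⟩ := ha
  have hk' : LinearMap.mulLeft ℤ a ^ k = 0 := by
    rw [LinearMap.pow_mulLeft, hk, LinearMap.mulLeft_zero_eq_zero]
  rw [exp_eq_sum hk', exp_eq_sum hk, LinearMap.sum_apply, sum_mul]
  refine sum_congr rfl fun i _ ↦ ?_
  rw [LinearMap.smul_apply, LinearMap.pow_mulLeft, LinearMap.mulLeft_apply]
  exact (map_rat_smul (AddMonoidHom.mulRight x) _ _).symm

theorem exp_mulRight_apply {a : A} (ha : IsNilpotent a) (x : A) :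
    exp (LinearMap.mulRight ℤ a) x = x * exp a := by
  obtain ⟨k, hk⟩ := ha
  have hk' : LinearMap.mulRight ℤ a ^ k = 0 := by
    rw [LinearMap.pow_mulRight, hk, LinearMap.mulRight_zero_eq_zero]
  rw [exp_eq_sum hk', exp_eq_sum hk, LinearMap.sum_apply, mul_sum]
  refine sum_congr rfl fun i _ ↦ ?_
  rw [LinearMap.smul_apply, LinearMap.pow_mulRight, LinearMap.mulRight_apply]
  exact (map_rat_smul (AddMonoidHom.mulLeft x) _ _).symm

theorem exp_mul_mul_exp_neg {a : A} (ha : IsNilpotent a) (x : A) :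
    exp a * x * exp (-a) = exp (LieAlgebra.ad ℤ A a) x := by
  have hL : IsNilpotent (LinearMap.mulLeft ℤ a) := (LinearMap.isNilpotent_mulLeft_iff ℤ a).2 ha
  have hR : IsNilpotent (LinearMap.mulRight ℤ (-a)) := (LinearMap.isNilpotent_mulRight_iff ℤ (-a)).2 ha.neg
  have had : LieAlgebra.ad ℤ A a = LinearMap.mulLeft ℤ a + LinearMap.mulRight ℤ (-a) := by
    ext y
    simp [LieRing.of_associative_ring_bracket, sub_eq_add_neg]
  rw [had, exp_add_of_commute (LinearMap.commute_mulLeft_right a (-a)) hL hR,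
    Module.End.mul_apply, exp_mulRight_apply ha.neg, exp_mulLeft_apply ha, mul_assoc]

end IsNilpotent

namespace LieAlgebra

variable {R L : Type*} [CommRing R] [LieRing L] [LieAlgebra R L]

theorem ad_pow_succ_ad_apply_of_derivation (d : Module.End R L)
    (hd : ∀ x y : L, d ⁅x, y⁆ = ⁅d x, y⁆ + ⁅x, d y⁆) (A : L) (k : ℕ) :
    (ad ℤ (Module.End R L) (ad R L A) ^ (k + 1)) d = -ad R L ((ad R L A ^ k) (d A)) := by
  induction k with
  | zero =>
    ext y
    simp [LieRing.of_associative_ring_bracket, hd]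
  | succ k ih =>
    rw [pow_succ', Module.End.mul_apply, ih, map_neg, ad_apply, ← LieHom.map_lie, pow_succ',
      Module.End.mul_apply, ad_apply]

end LieAlgebra

/-- Lemma 3.2 of Cao–Zhou, ungraded form: for a Lie derivation `d` of `L` and
`A ∈ L` with `(ad_A)^N = 0`, letting `E = exp(ad_A)` and `Eneg = exp(-ad_A)`
(finite sums), one has
`E ∘ d ∘ Eneg = d - Σ_{q} (1/(q+1)!) • ad_{((ad_A)^q)(d A)}`. -/
theorem stmt9 {R : Type*} [CommRing R] [Algebra ℚ R]
    {L : Type*} [LieRing L] [LieAlgebra R L]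
    (d : L →ₗ[R] L) (hd : ∀ x y : L, d ⁅x, y⁆ = ⁅d x, y⁆ + ⁅x, d y⁆)
    (A : L) (N : ℕ) (hN : (LieAlgebra.ad R L A) ^ N = 0)
    (E Eneg : Module.End R L)
    (hE : E = ∑ n ∈ Finset.range N,
        algebraMap ℚ R (1 / (n.factorial : ℚ)) • (LieAlgebra.ad R L A) ^ n)
    (hEneg : Eneg = ∑ n ∈ Finset.range N,
        algebraMap ℚ R (1 / (n.factorial : ℚ)) • (-(LieAlgebra.ad R L A)) ^ n) :
    E * d * Eneg =
      d - ∑ q ∈ Finset.range N,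
        algebraMap ℚ R (1 / ((q + 1).factorial : ℚ)) •
          LieAlgebra.ad R L (((LieAlgebra.ad R L A) ^ q) (d A)) := by
  -- `ℚ` acts on `End R L` through `R`, so `exp` has literally the coefficients of `hE` and `hEneg`.
  let _ : Module ℚ (Module.End R L) := Module.compHom _ (algebraMap ℚ R)
  have hE' : E = exp (LieAlgebra.ad R L A) := by
    rw [hE, exp_eq_sum hN]
    simp only [one_div]
    rfl
  have hEneg' : Eneg = exp (-LieAlgebra.ad R L A) := by
    rw [hEneg, exp_eq_sum (by rw [neg_pow, hN, mul_zero])]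
    simp only [one_div]
    rfl
  have hvanish : (LieAlgebra.ad ℤ _ (LieAlgebra.ad R L A) ^ (N + 1)) d = 0 := by
    rw [LieAlgebra.ad_pow_succ_ad_apply_of_derivation d hd, hN, LinearMap.zero_apply, map_zero,
      neg_zero]
  rw [hE', hEneg', exp_mul_mul_exp_neg ⟨N, hN⟩, ← Module.End.smul_def,
    exp_smul_eq_sum hvanish (LieAlgebra.ad_nilpotent_of_nilpotent ⟨N, hN⟩), sum_range_succ']
  simp only [Module.End.smul_def, LieAlgebra.ad_pow_succ_ad_apply_of_derivation d hd, pow_zero,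
    Nat.factorial_zero, Nat.cast_one, inv_one, one_smul, smul_neg,
    sum_neg_distrib, one_div, neg_add_eq_sub]
  rfl
end
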